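/- arXiv:1602.08883 — 6 statements merged into one kernel-verified Lean document; each statement's English description precedes it below -/
import Mathlib

section
/- Let H be a Hilbert space and P₁,…,Pₙ bounded projections (idempotents) on H with PᵢPⱼ = 0 for i ≠ j and P₁ + ⋯ + Pₙ = I. Then the operator Θ := Σₖ Pₖ*Pₖ is bounded and uniformly positive; more precisely, (Θf, f) ≥ (1/n)‖f‖² for all f ∈ H. -/
open scoped InnerProductSpace

/-- If `P 1, …, P n` are bounded projections on a complex Hilbert
space `H` with `Pᵢ Pⱼ = 0` for `i ≠ j` and `∑ Pₖ = I`, then `Θ = ∑ Pₖ* Pₖ`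
satisfies `(Θ f, f) ≥ (1/n) ‖f‖²` for all `f`. -/
theorem theta_uniformly_positive
    {H : Type*} [NormedAddCommGroup H] [InnerProductSpace ℂ H] [CompleteSpace H]
    (n : ℕ) (hn : 0 < n) (P : Fin n → H →L[ℂ] H)
    (hidem : ∀ k, P k ∘L P k = P k)
    (horth : ∀ i j, i ≠ j → P i ∘L P j = 0)
    (hsum : ∑ k, P k = 1) :
    ∀ f : H,
      (1 / (n : ℝ)) * ‖f‖ ^ 2 ≤
        (⟪(∑ k, (P k).adjoint ∘L P k) f, f⟫_ℂ).re := by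
  intro f
  have hre : (⟪(∑ k, (P k).adjoint ∘L P k) f, f⟫_ℂ).re = ∑ k, ‖P k f‖ ^ 2 := by
    simp only [ContinuousLinearMap.sum_apply, sum_inner, Complex.re_sum,
      ContinuousLinearMap.comp_apply, ContinuousLinearMap.adjoint_inner_left]
    congr 1
    ext k
    exact inner_self_eq_norm_sq (𝕜 := ℂ) _
  rw [hre]
  have h1 : ‖f‖ ≤ ∑ k, ‖P k f‖ := by
    calc ‖f‖ = ‖∑ k, P k f‖ := by
          rw [← ContinuousLinearMap.sum_apply, hsum]; rfl
      _ ≤ ∑ k, ‖P k f‖ := norm_sum_le _ _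
  have h2 : (∑ k, ‖P k f‖) ^ 2 ≤ n * ∑ k, ‖P k f‖ ^ 2 := by
    simpa using sq_sum_le_card_mul_sum_sq (s := Finset.univ)
      (f := fun k => ‖P k f‖)
  have h3 : ‖f‖ ^ 2 ≤ (∑ k, ‖P k f‖) ^ 2 :=
    pow_le_pow_left₀ (norm_nonneg f) h1 2
  have hn' : (0 : ℝ) < n := by exact_mod_cast hn
  rw [div_mul_eq_mul_div, one_mul, div_le_iff₀ hn']
  calc ‖f‖ ^ 2 ≤ n * ∑ k, ‖P k f‖ ^ 2 := le_trans h3 h2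
    _ = (∑ k, ‖P k f‖ ^ 2) * n := mul_comm _ _
end

section
/- Suppose H₁⁺, H₂⁺ are closed subspaces of Hilbert spaces H₁, H₂ with bounded symmetric involutions J₁, J₂ such that (J₁f, f)₁ ≥ κ₁‖f‖₁² for all f ∈ H₁⁺ and (J₂g, g)₂ ≥ κ₂‖g‖₂² for all g ∈ H₂⁺, with κ₁, κ₂ > 0. Then for every u in the closed tensor product subspace H₁⁺ ⊗ H₂⁺ of H₁ ⊗ H₂, one has ((J₁⊗J₂)u, u) ≥ κ₁κ₂‖u‖². -/
/-!
For `u = ∑ᵢ fᵢ ⊗ gᵢ` one has `⟪(J₁ ⊗ J₂) u, u⟫ = ∑ᵢⱼ Aᵢⱼ Bᵢⱼ` and `‖u‖² = ∑ᵢⱼ Fᵢⱼ Gᵢⱼ`, where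
`A = (⟪J₁ fᵢ, fⱼ⟫)`, `B = (⟪J₂ gᵢ, gⱼ⟫)` and `F`, `G` are the Gram matrices of the `fᵢ` and `gᵢ`.
The hypotheses make `A - κ₁ F`, `B - κ₂ G`, `B` and `F` positive semidefinite, so by the Schur
product theorem so is `A ⊙ B - κ₁κ₂ F ⊙ G = (A - κ₁ F) ⊙ B + κ₁ F ⊙ (B - κ₂ G)`, and the sum of
its entries is nonnegative. Both sides of the inequality are continuous in `u`, so it passes from
the span of the elementary tensors to its closure.
-/

open scoped InnerProductSpace ComplexOrder
open Matrix RCLike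

section Matrix

variable {𝕜 E ι : Type*} [RCLike 𝕜] [NormedAddCommGroup E] [InnerProductSpace 𝕜 E]

theorem Matrix.PosSemidef.hadamard_sub_smul_hadamard {A B F G : Matrix ι ι 𝕜} {κ₁ κ₂ : ℝ}
    (hκ₁ : 0 ≤ κ₁) (hAF : (A - κ₁ • F).PosSemidef) (hB : B.PosSemidef) (hF : F.PosSemidef)
    (hBG : (B - κ₂ • G).PosSemidef) :
    (A ⊙ B - (κ₁ * κ₂) • (F ⊙ G)).PosSemidef := by
  have hsplit : A ⊙ B - (κ₁ * κ₂) • (F ⊙ G) = (A - κ₁ • F) ⊙ B + (κ₁ • F) ⊙ (B - κ₂ • G) := by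
    ext i j
    simp only [sub_apply, add_apply, smul_apply, hadamard_apply, RCLike.real_smul_eq_coe_mul]
    push_cast
    ring
  rw [hsplit]
  exact (hAF.hadamard hB).add ((hF.smul hκ₁).hadamard hBG)

variable [Fintype ι]

theorem Matrix.star_dotProduct_of_inner_mulVec (v w : ι → E) (x y : ι → 𝕜) :
    star x ⬝ᵥ (of fun i j ↦ ⟪v i, w j⟫_𝕜) *ᵥ y = ⟪∑ i, x i • v i, ∑ j, y j • w j⟫_𝕜 := by
  simp_rw [sum_inner, inner_sum, inner_smul_left, inner_smul_right, dotProduct, mulVec,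
    dotProduct, Finset.mul_sum, of_apply, Pi.star_apply, RCLike.star_def]
  exact Finset.sum_congr rfl fun i _ ↦ Finset.sum_congr rfl fun j _ ↦ by ring

theorem Matrix.posSemidef_of_isSymmetric_of_nonneg {T : E →ₗ[𝕜] E} (hT : T.IsSymmetric)
    {p : Submodule 𝕜 E} (hp : ∀ v ∈ p, 0 ≤ re ⟪T v, v⟫_𝕜) {f : ι → E} (hf : ∀ i, f i ∈ p) :
    (of fun i j ↦ ⟪T (f i), f j⟫_𝕜).PosSemidef := by
  refine .of_dotProduct_mulVec_nonneg ?_ fun x ↦ ?_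
  · ext i j
    simp [hT (f j), hT (f i)]
  · have hv : ∑ i, x i • f i ∈ p := p.sum_mem fun i _ ↦ p.smul_mem _ (hf i)
    have hTv : ∑ i, x i • T (f i) = T (∑ i, x i • f i) := by simp
    rw [star_dotProduct_of_inner_mulVec, hTv, ← hT.coe_re_inner_apply_self, RCLike.ofReal_nonneg]
    exact hp _ hv

theorem Matrix.posSemidef_sub_smul_gram_of_isSymmetric {T : E →ₗ[𝕜] E} (hT : T.IsSymmetric)
    {p : Submodule 𝕜 E} {κ : ℝ} (hp : ∀ v ∈ p, κ * ‖v‖ ^ 2 ≤ re ⟪T v, v⟫_𝕜)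
    {f : ι → E} (hf : ∀ i, f i ∈ p) :
    (of (fun i j ↦ ⟪T (f i), f j⟫_𝕜) - κ • gram 𝕜 f).PosSemidef := by
  have hS : (T - (κ : 𝕜) • LinearMap.id).IsSymmetric :=
    hT.sub (LinearMap.IsSymmetric.id.smul (conj_ofReal κ))
  convert posSemidef_of_isSymmetric_of_nonneg hS (p := p) (fun v hv ↦ ?_) hf using 1
  · ext i j
    simp [inner_sub_left, inner_smul_left, RCLike.real_smul_eq_coe_mul]
  · simpa only [LinearMap.sub_apply, LinearMap.smul_apply, LinearMap.id_coe, id_eq,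
      inner_sub_left, inner_smul_left, conj_ofReal, inner_self_eq_norm_sq_to_K, map_sub, mul_re,
      ofReal_re, re_ofReal_pow, ofReal_im, im_ofReal_pow, mul_zero, sub_zero, sub_nonneg]
      using hp v hv

theorem Matrix.PosSemidef.sum_entries_nonneg {M : Matrix ι ι 𝕜} (hM : M.PosSemidef) :
    0 ≤ ∑ i, ∑ j, M i j := by
  simpa [dotProduct, mulVec] using hM.dotProduct_mulVec_nonneg 1

end Matrix

theorem Submodule.exists_sum_apply₂_of_mem_span {R M N P : Type*} [CommSemiring R]
    [AddCommMonoid M] [AddCommMonoid N] [AddCommMonoid P] [Module R M] [Module R N] [Module R P]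
    (b : M →ₗ[R] N →ₗ[R] P) {p : Submodule R M} {q : Submodule R N} {x : P}
    (hx : x ∈ span R {x | ∃ f ∈ p, ∃ g ∈ q, x = b f g}) :
    ∃ (n : ℕ) (f : Fin n → M) (g : Fin n → N),
      (∀ i, f i ∈ p) ∧ (∀ i, g i ∈ q) ∧ x = ∑ i, b (f i) (g i) := by
  obtain ⟨n, c, s, rfl⟩ := mem_span_set'.1 hx
  choose f hf g hg hfg using fun i ↦ (s i).2
  exact ⟨n, fun i ↦ c i • f i, g, fun i ↦ p.smul_mem _ (hf i), hg, by simp [hfg]⟩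

section Tensor

variable {𝕜 H₁ H₂ H ι : Type*} [RCLike 𝕜] [Fintype ι]
  [NormedAddCommGroup H₁] [InnerProductSpace 𝕜 H₁]
  [NormedAddCommGroup H₂] [InnerProductSpace 𝕜 H₂]
  [NormedAddCommGroup H] [InnerProductSpace 𝕜 H]
  {tmul : H₁ →ₗ[𝕜] H₂ →ₗ[𝕜] H}

theorem inner_sum_tmul_sum_tmul
    (hinner : ∀ (f₁ f₂ : H₁) (h₁ h₂ : H₂), ⟪tmul f₁ h₁, tmul f₂ h₂⟫_𝕜 = ⟪f₁, f₂⟫_𝕜 * ⟪h₁, h₂⟫_𝕜)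
    (f f' : ι → H₁) (g g' : ι → H₂) :
    ⟪∑ i, tmul (f i) (g i), ∑ j, tmul (f' j) (g' j)⟫_𝕜
      = ∑ i, ∑ j, ⟪f i, f' j⟫_𝕜 * ⟪g i, g' j⟫_𝕜 := by
  simp_rw [sum_inner, inner_sum, hinner]

theorem mul_norm_sq_le_re_inner_map_sum_tmul
    (hinner : ∀ (f₁ f₂ : H₁) (h₁ h₂ : H₂), ⟪tmul f₁ h₁, tmul f₂ h₂⟫_𝕜 = ⟪f₁, f₂⟫_𝕜 * ⟪h₁, h₂⟫_𝕜)
    {J₁ : H₁ →ₗ[𝕜] H₁} (hJ₁ : J₁.IsSymmetric) {J₂ : H₂ →ₗ[𝕜] H₂} (hJ₂ : J₂.IsSymmetric)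
    {J : H →ₗ[𝕜] H} (hJ : ∀ f h, J (tmul f h) = tmul (J₁ f) (J₂ h))
    {p₁ : Submodule 𝕜 H₁} {p₂ : Submodule 𝕜 H₂} {κ₁ κ₂ : ℝ} (hκ₁ : 0 ≤ κ₁) (hκ₂ : 0 ≤ κ₂)
    (h₁ : ∀ f ∈ p₁, κ₁ * ‖f‖ ^ 2 ≤ re ⟪J₁ f, f⟫_𝕜)
    (h₂ : ∀ g ∈ p₂, κ₂ * ‖g‖ ^ 2 ≤ re ⟪J₂ g, g⟫_𝕜)
    {f : ι → H₁} (hf : ∀ i, f i ∈ p₁) {g : ι → H₂} (hg : ∀ i, g i ∈ p₂) :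
    κ₁ * κ₂ * ‖∑ i, tmul (f i) (g i)‖ ^ 2
      ≤ re ⟪J (∑ i, tmul (f i) (g i)), ∑ i, tmul (f i) (g i)⟫_𝕜 := by
  have hJ₂_nonneg : ∀ g ∈ p₂, 0 ≤ re ⟪J₂ g, g⟫_𝕜 := fun g hg ↦
    (by positivity : 0 ≤ κ₂ * ‖g‖ ^ 2).trans (h₂ g hg)
  have hM := (PosSemidef.hadamard_sub_smul_hadamard hκ₁
    (posSemidef_sub_smul_gram_of_isSymmetric hJ₁ h₁ hf)
    (posSemidef_of_isSymmetric_of_nonneg hJ₂ hJ₂_nonneg hg) (posSemidef_gram 𝕜 f)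
    (posSemidef_sub_smul_gram_of_isSymmetric hJ₂ h₂ hg)).sum_entries_nonneg
  have hJu : J (∑ i, tmul (f i) (g i)) = ∑ i, tmul (J₁ (f i)) (J₂ (g i)) := by
    simp [hJ]
  simp only [Matrix.sub_apply, Matrix.smul_apply, hadamard_apply, of_apply, gram_apply,
    Finset.sum_sub_distrib, ← Finset.smul_sum, ← inner_sum_tmul_sum_tmul hinner, ← hJu,
    inner_self_eq_norm_sq_to_K] at hM
  have hre := (RCLike.nonneg_iff.1 hM).1
  rwa [map_sub, RCLike.smul_re, ← ofReal_pow, ofReal_re, sub_nonneg] at hre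

end Tensor

theorem tensor_uniformly_positive_subspace_general
    {H₁ H₂ H : Type*}
    [NormedAddCommGroup H₁] [InnerProductSpace ℂ H₁] [CompleteSpace H₁]
    [NormedAddCommGroup H₂] [InnerProductSpace ℂ H₂] [CompleteSpace H₂]
    [NormedAddCommGroup H] [InnerProductSpace ℂ H]
    (tmul : H₁ →ₗ[ℂ] H₂ →ₗ[ℂ] H)
    (hinner : ∀ (f₁ f₂ : H₁) (h₁ h₂ : H₂),
      ⟪tmul f₁ h₁, tmul f₂ h₂⟫_ℂ = ⟪f₁, f₂⟫_ℂ * ⟪h₁, h₂⟫_ℂ)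
    (J₁ : H₁ →L[ℂ] H₁) (hJ₁sa : IsSelfAdjoint J₁)
    (J₂ : H₂ →L[ℂ] H₂) (hJ₂sa : IsSelfAdjoint J₂)
    (J : H →L[ℂ] H)
    (hJ : ∀ (f : H₁) (h : H₂), J (tmul f h) = tmul (J₁ f) (J₂ h))
    (H₁p : Submodule ℂ H₁)
    (H₂p : Submodule ℂ H₂)
    (κ₁ κ₂ : ℝ) (hκ₁ : 0 < κ₁) (hκ₂ : 0 < κ₂)
    (h₁ : ∀ f ∈ H₁p, κ₁ * ‖f‖ ^ 2 ≤ (⟪J₁ f, f⟫_ℂ).re)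
    (h₂ : ∀ g ∈ H₂p, κ₂ * ‖g‖ ^ 2 ≤ (⟪J₂ g, g⟫_ℂ).re)
    (u : H)
    (hu : u ∈ closure
      (Submodule.span ℂ {x : H | ∃ f ∈ H₁p, ∃ g ∈ H₂p, x = tmul f g} : Set H)) :
    κ₁ * κ₂ * ‖u‖ ^ 2 ≤ (⟪J u, u⟫_ℂ).re := by
  refine closure_minimal (t := {v | κ₁ * κ₂ * ‖v‖ ^ 2 ≤ (⟪J v, v⟫_ℂ).re}) (fun v hv ↦ ?_)
    (isClosed_le (by fun_prop) (by fun_prop)) hu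
  obtain ⟨n, f, g, hf, hg, rfl⟩ := Submodule.exists_sum_apply₂_of_mem_span tmul hv
  exact mul_norm_sq_le_re_inner_map_sum_tmul (J := (J : H →ₗ[ℂ] H)) hinner hJ₁sa.isSymmetric
    hJ₂sa.isSymmetric hJ hκ₁.le hκ₂.le h₁ h₂ hf hg

/-- if `(J₁ f, f) ≥ κ₁ ‖f‖²` on a closed subspace `H₁⁺` and
`(J₂ g, g) ≥ κ₂ ‖g‖²` on a closed subspace `H₂⁺`, then on the closed span of
the elementary tensors `f ⊗ g`, `f ∈ H₁⁺`, `g ∈ H₂⁺`, one has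
`((J₁ ⊗ J₂) u, u) ≥ κ₁ κ₂ ‖u‖²`. -/
theorem tensor_uniformly_positive_subspace
    {H₁ H₂ H : Type*}
    [NormedAddCommGroup H₁] [InnerProductSpace ℂ H₁] [CompleteSpace H₁]
    [NormedAddCommGroup H₂] [InnerProductSpace ℂ H₂] [CompleteSpace H₂]
    [NormedAddCommGroup H] [InnerProductSpace ℂ H] [CompleteSpace H]
    (tmul : H₁ →ₗ[ℂ] H₂ →ₗ[ℂ] H)
    (hinner : ∀ (f₁ f₂ : H₁) (h₁ h₂ : H₂),
      ⟪tmul f₁ h₁, tmul f₂ h₂⟫_ℂ = ⟪f₁, f₂⟫_ℂ * ⟪h₁, h₂⟫_ℂ)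
    (J₁ : H₁ →L[ℂ] H₁) (hJ₁sa : IsSelfAdjoint J₁) (hJ₁2 : J₁ ∘L J₁ = 1)
    (J₂ : H₂ →L[ℂ] H₂) (hJ₂sa : IsSelfAdjoint J₂) (hJ₂2 : J₂ ∘L J₂ = 1)
    (J : H →L[ℂ] H)
    (hJ : ∀ (f : H₁) (h : H₂), J (tmul f h) = tmul (J₁ f) (J₂ h))
    (H₁p : Submodule ℂ H₁) (hH₁p : IsClosed (H₁p : Set H₁))
    (H₂p : Submodule ℂ H₂) (hH₂p : IsClosed (H₂p : Set H₂))
    (κ₁ κ₂ : ℝ) (hκ₁ : 0 < κ₁) (hκ₂ : 0 < κ₂)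
    (h₁ : ∀ f ∈ H₁p, κ₁ * ‖f‖ ^ 2 ≤ (⟪J₁ f, f⟫_ℂ).re)
    (h₂ : ∀ g ∈ H₂p, κ₂ * ‖g‖ ^ 2 ≤ (⟪J₂ g, g⟫_ℂ).re)
    (u : H)
    (hu : u ∈ closure
      (Submodule.span ℂ {x : H | ∃ f ∈ H₁p, ∃ g ∈ H₂p, x = tmul f g} : Set H)) :
    κ₁ * κ₂ * ‖u‖ ^ 2 ≤ (⟪J u, u⟫_ℂ).re :=
  tensor_uniformly_positive_subspace_general tmul hinner J₁ hJ₁sa J₂ hJ₂sa J hJ H₁p H₂p κ₁ κ₂ hκ₁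
    hκ₂ h₁ h₂ u hu
end

section
/- Suppose H₁⁺ ⊆ H₁ satisfies (J₁f, f)₁ ≥ κ₁‖f‖₁² (κ₁ > 0) for all f ∈ H₁⁺ and H₂⁻ ⊆ H₂ satisfies (J₂g, g)₂ ≤ −κ₂‖g‖₂² (κ₂ > 0) for all g ∈ H₂⁻, where J₁, J₂ are bounded symmetric involutions. Then for every u in the closed subspace H₁⁺ ⊗ H₂⁻ of H₁ ⊗ H₂, one has ((J₁⊗J₂)u, u) ≤ −κ₁κ₂‖u‖². -/
/-!
For a finite sum `w = ∑ᵢ fᵢ ⊗ gᵢ`, both `-⟪J w, w⟫` and `‖w‖²` are entry sums of Hadamard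
products of Gram-type matrices: `-⟪J w, w⟫ = ∑ᵢⱼ Aᵢⱼ Bᵢⱼ` with `Aᵢⱼ = ⟪J₁ fᵢ, fⱼ⟫`,
`Bᵢⱼ = ⟪-J₂ gᵢ, gⱼ⟫`, and `‖w‖² = ∑ᵢⱼ Gᵢⱼ G'ᵢⱼ` with the Gram matrices `G`, `G'` of `f`, `g`.
The hypotheses on `H₁⁺` and `H₂⁻` say `κ₁ G ≤ A` and `κ₂ G' ≤ B` in the Loewner order. By the
Schur product theorem the Hadamard product is monotone on positive semidefinite matrices, so
`κ₁ κ₂ (G ⊙ G') ≤ A ⊙ B`, and summing the entries gives the inequality on the algebraic span.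
Both sides are continuous in `w`, so it passes to the closure.
-/

open scoped InnerProductSpace ComplexOrder MatrixOrder
open Matrix

namespace Matrix

variable {𝕜 ι : Type*} [RCLike 𝕜]

theorem hadamard_le_hadamard {A B C D : Matrix ι ι 𝕜} (hA : 0 ≤ A) (hAB : A ≤ B)
    (hC : 0 ≤ C) (hCD : C ≤ D) : A ⊙ C ≤ B ⊙ D := by
  have hD : D.PosSemidef := by simpa using hC.posSemidef.add hCD
  have hsplit : B ⊙ D - A ⊙ C = (B - A) ⊙ D + A ⊙ (D - C) := by
    ext i j
    simp only [sub_apply, add_apply, hadamard_apply]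
    ring
  rw [le_iff, hsplit]
  exact (hAB.hadamard hD).add (hA.posSemidef.hadamard hCD)

theorem monotone_sum_entries [Fintype ι] :
    Monotone fun M : Matrix ι ι 𝕜 => ∑ i, ∑ j, M i j := by
  intro M N hMN
  have h := hMN.dotProduct_mulVec_nonneg 1
  simp only [star_one, mulVec, dotProduct, Pi.one_apply, one_mul, mul_one, sub_apply,
    Finset.sum_sub_distrib, sub_nonneg] at h
  exact h

variable {E : Type*} [NormedAddCommGroup E] [InnerProductSpace 𝕜 E]

def formGram (T : E →ₗ[𝕜] E) (v : ι → E) : Matrix ι ι 𝕜 :=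
  of fun i j => ⟪T (v i), v j⟫_𝕜

theorem star_dotProduct_formGram_mulVec [Fintype ι] (T : E →ₗ[𝕜] E) (v : ι → E)
    (x y : ι → 𝕜) :
    star x ⬝ᵥ formGram T v *ᵥ y = ⟪T (∑ i, x i • v i), ∑ i, y i • v i⟫_𝕜 := by
  simp only [formGram, dotProduct, mulVec, of_apply, Finset.mul_sum, Pi.star_apply,
    RCLike.star_def, map_sum, map_smul, sum_inner]
  simp only [inner_sum, inner_smul_left, inner_smul_right]
  exact Finset.sum_congr rfl fun i _ => Finset.sum_congr rfl fun j _ => by ring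

theorem isHermitian_formGram {T : E →ₗ[𝕜] E} (hT : T.IsSymmetric) (v : ι → E) :
    (formGram T v).IsHermitian := by
  ext i j
  simp [formGram, conjTranspose_apply, hT (v j)]

theorem smul_gram_le_formGram [Fintype ι] {T : E →ₗ[𝕜] E} (hT : T.IsSymmetric)
    {K : Submodule 𝕜 E} {r : ℝ} (hTK : ∀ u ∈ K, r * ‖u‖ ^ 2 ≤ RCLike.re ⟪T u, u⟫_𝕜)
    {v : ι → E} (hv : ∀ i, v i ∈ K) : r • gram 𝕜 v ≤ formGram T v := by
  refine .of_dotProduct_mulVec_nonneg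
    ((isHermitian_formGram hT v).sub ((isHermitian_gram 𝕜 v).smul (.all r))) fun x => ?_
  have hu : ∑ i, x i • v i ∈ K := K.sum_mem fun i _ => K.smul_mem _ (hv i)
  rw [sub_mulVec, dotProduct_sub, star_dotProduct_formGram_mulVec, smul_mulVec, dotProduct_smul,
    star_dotProduct_gram_mulVec, sub_nonneg, ← hT.coe_re_inner_apply_self,
    inner_self_eq_norm_sq_to_K, RCLike.real_smul_eq_coe_mul]
  exact_mod_cast hTK _ hu

end Matrix

theorem exists_fin_sum_tmul_of_mem_span {R M₁ M₂ M : Type*} [CommSemiring R]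
    [AddCommMonoid M₁] [Module R M₁] [AddCommMonoid M₂] [Module R M₂]
    [AddCommMonoid M] [Module R M] (tmul : M₁ →ₗ[R] M₂ →ₗ[R] M)
    {K₁ : Submodule R M₁} {K₂ : Submodule R M₂} {w : M}
    (hw : w ∈ Submodule.span R {x : M | ∃ f ∈ K₁, ∃ g ∈ K₂, x = tmul f g}) :
    ∃ (n : ℕ) (f : Fin n → M₁) (g : Fin n → M₂),
      (∀ i, f i ∈ K₁) ∧ (∀ i, g i ∈ K₂) ∧ w = ∑ i, tmul (f i) (g i) := by
  obtain ⟨n, c, x, rfl⟩ := Submodule.mem_span_set'.mp hw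
  choose f hf g hg hx using fun i => (x i).2
  refine ⟨n, fun i => c i • f i, g, fun i => K₁.smul_mem _ (hf i), hg, ?_⟩
  simp [hx]

section TensorSum

variable {𝕜 E₁ E₂ E ι : Type*} [RCLike 𝕜] [Fintype ι]
  [NormedAddCommGroup E₁] [InnerProductSpace 𝕜 E₁]
  [NormedAddCommGroup E₂] [InnerProductSpace 𝕜 E₂]
  [NormedAddCommGroup E] [InnerProductSpace 𝕜 E]
  (tmul : E₁ →ₗ[𝕜] E₂ →ₗ[𝕜] E)
  (hinner : ∀ (f₁ f₂ : E₁) (h₁ h₂ : E₂),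
    ⟪tmul f₁ h₁, tmul f₂ h₂⟫_𝕜 = ⟪f₁, f₂⟫_𝕜 * ⟪h₁, h₂⟫_𝕜)
include hinner

theorem inner_sum_tmul_sum_tmul_s9 (a c : ι → E₁) (b d : ι → E₂) :
    ⟪∑ i, tmul (a i) (b i), ∑ j, tmul (c j) (d j)⟫_𝕜
      = ∑ i, ∑ j, ⟪a i, c j⟫_𝕜 * ⟪b i, d j⟫_𝕜 := by
  simp only [sum_inner, inner_sum, hinner]
  exact Finset.sum_comm

theorem re_inner_apply_sum_tmul_le {S : E₁ →ₗ[𝕜] E₁} {T : E₂ →ₗ[𝕜] E₂} {A : E →ₗ[𝕜] E}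
    (hS : S.IsSymmetric) (hT : T.IsSymmetric)
    (hA : ∀ (f : E₁) (h : E₂), A (tmul f h) = tmul (S f) (T h))
    {K₁ : Submodule 𝕜 E₁} {K₂ : Submodule 𝕜 E₂} {κ₁ κ₂ : ℝ} (hκ₁ : 0 ≤ κ₁) (hκ₂ : 0 ≤ κ₂)
    (h₁ : ∀ f ∈ K₁, κ₁ * ‖f‖ ^ 2 ≤ RCLike.re ⟪S f, f⟫_𝕜)
    (h₂ : ∀ g ∈ K₂, RCLike.re ⟪T g, g⟫_𝕜 ≤ -(κ₂ * ‖g‖ ^ 2))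
    {f : ι → E₁} {g : ι → E₂} (hf : ∀ i, f i ∈ K₁) (hg : ∀ i, g i ∈ K₂) :
    RCLike.re ⟪A (∑ i, tmul (f i) (g i)), ∑ i, tmul (f i) (g i)⟫_𝕜
      ≤ -(κ₁ * κ₂ * ‖∑ i, tmul (f i) (g i)‖ ^ 2) := by
  set w := ∑ i, tmul (f i) (g i)
  have hnegT : (-T).IsSymmetric := fun x y => by
    simp only [LinearMap.neg_apply, inner_neg_left, inner_neg_right, hT x y]
  have hSf : κ₁ • gram 𝕜 f ≤ formGram S f := smul_gram_le_formGram hS h₁ hf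
  have hTg : κ₂ • gram 𝕜 g ≤ formGram (-T) g :=
    smul_gram_le_formGram hnegT (fun x hx => by simpa [le_neg] using h₂ x hx) hg
  have hnorm : ⟪w, w⟫_𝕜 = ∑ i, ∑ j, (gram 𝕜 f ⊙ gram 𝕜 g) i j :=
    inner_sum_tmul_sum_tmul_s9 tmul hinner f f g g
  have hAw : -⟪A w, w⟫_𝕜 = ∑ i, ∑ j, (formGram S f ⊙ formGram (-T) g) i j := by
    have hneg : -A w = ∑ i, tmul (S (f i)) ((-T) (g i)) := by simp [w, hA]
    rw [← inner_neg_left, hneg]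
    exact inner_sum_tmul_sum_tmul_s9 tmul hinner _ _ _ _
  have key := monotone_sum_entries (hadamard_le_hadamard
    ((posSemidef_gram 𝕜 f).smul hκ₁).nonneg hSf ((posSemidef_gram 𝕜 g).smul hκ₂).nonneg hTg)
  rw [smul_hadamard, hadamard_smul, smul_smul] at key
  simp only [Matrix.smul_apply, ← Finset.smul_sum] at key
  rw [← hnorm, ← hAw] at key
  have hre := (RCLike.le_iff_re_im.mp key).1
  rw [RCLike.smul_re, map_neg, inner_self_eq_norm_sq] at hre
  linarith

end TensorSum

theorem tensor_uniformly_negative_subspace_general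
    {H₁ H₂ H : Type*}
    [NormedAddCommGroup H₁] [InnerProductSpace ℂ H₁] [CompleteSpace H₁]
    [NormedAddCommGroup H₂] [InnerProductSpace ℂ H₂] [CompleteSpace H₂]
    [NormedAddCommGroup H] [InnerProductSpace ℂ H]
    (tmul : H₁ →ₗ[ℂ] H₂ →ₗ[ℂ] H)
    (hinner : ∀ (f₁ f₂ : H₁) (h₁ h₂ : H₂),
      ⟪tmul f₁ h₁, tmul f₂ h₂⟫_ℂ = ⟪f₁, f₂⟫_ℂ * ⟪h₁, h₂⟫_ℂ)
    (J₁ : H₁ →L[ℂ] H₁) (hJ₁sa : IsSelfAdjoint J₁)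
    (J₂ : H₂ →L[ℂ] H₂) (hJ₂sa : IsSelfAdjoint J₂)
    (J : H →L[ℂ] H)
    (hJ : ∀ (f : H₁) (h : H₂), J (tmul f h) = tmul (J₁ f) (J₂ h))
    (H₁p : Submodule ℂ H₁)
    (H₂p : Submodule ℂ H₂)
    (κ₁ κ₂ : ℝ) (hκ₁ : 0 < κ₁) (hκ₂ : 0 < κ₂)
    (h₁ : ∀ f ∈ H₁p, κ₁ * ‖f‖ ^ 2 ≤ (⟪J₁ f, f⟫_ℂ).re)
    (h₂ : ∀ g ∈ H₂p, (⟪J₂ g, g⟫_ℂ).re ≤ -(κ₂ * ‖g‖ ^ 2))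
    (u : H)
    (hu : u ∈ closure
      (Submodule.span ℂ {x : H | ∃ f ∈ H₁p, ∃ g ∈ H₂p, x = tmul f g} : Set H)) :
    (⟪J u, u⟫_ℂ).re ≤ -(κ₁ * κ₂ * ‖u‖ ^ 2) := by
  have hclosed : IsClosed {w : H | (⟪J w, w⟫_ℂ).re ≤ -(κ₁ * κ₂ * ‖w‖ ^ 2)} :=
    isClosed_le (by fun_prop) (by fun_prop)
  refine closure_minimal (fun w hw => ?_) hclosed hu
  obtain ⟨n, f, g, hf, hg, rfl⟩ := exists_fin_sum_tmul_of_mem_span tmul hw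
  exact re_inner_apply_sum_tmul_le (A := (J : H →ₗ[ℂ] H)) tmul hinner hJ₁sa.isSymmetric
    hJ₂sa.isSymmetric hJ hκ₁.le hκ₂.le h₁ h₂ hf hg

/-- if `(J₁ f, f) ≥ κ₁ ‖f‖²` on a closed subspace `H₁⁺` and
`(J₂ g, g) ≤ −κ₂ ‖g‖²` on a closed subspace `H₂⁻`, then on the closed span of
the elementary tensors `f ⊗ g`, `f ∈ H₁⁺`, `g ∈ H₂⁻`, one has
`((J₁ ⊗ J₂) u, u) ≤ −κ₁ κ₂ ‖u‖²`. -/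
theorem tensor_uniformly_negative_subspace
    {H₁ H₂ H : Type*}
    [NormedAddCommGroup H₁] [InnerProductSpace ℂ H₁] [CompleteSpace H₁]
    [NormedAddCommGroup H₂] [InnerProductSpace ℂ H₂] [CompleteSpace H₂]
    [NormedAddCommGroup H] [InnerProductSpace ℂ H] [CompleteSpace H]
    (tmul : H₁ →ₗ[ℂ] H₂ →ₗ[ℂ] H)
    (hinner : ∀ (f₁ f₂ : H₁) (h₁ h₂ : H₂),
      ⟪tmul f₁ h₁, tmul f₂ h₂⟫_ℂ = ⟪f₁, f₂⟫_ℂ * ⟪h₁, h₂⟫_ℂ)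
    (J₁ : H₁ →L[ℂ] H₁) (hJ₁sa : IsSelfAdjoint J₁) (hJ₁2 : J₁ ∘L J₁ = 1)
    (J₂ : H₂ →L[ℂ] H₂) (hJ₂sa : IsSelfAdjoint J₂) (hJ₂2 : J₂ ∘L J₂ = 1)
    (J : H →L[ℂ] H)
    (hJ : ∀ (f : H₁) (h : H₂), J (tmul f h) = tmul (J₁ f) (J₂ h))
    (H₁p : Submodule ℂ H₁) (hH₁p : IsClosed (H₁p : Set H₁))
    (H₂p : Submodule ℂ H₂) (hH₂p : IsClosed (H₂p : Set H₂))
    (κ₁ κ₂ : ℝ) (hκ₁ : 0 < κ₁) (hκ₂ : 0 < κ₂)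
    (h₁ : ∀ f ∈ H₁p, κ₁ * ‖f‖ ^ 2 ≤ (⟪J₁ f, f⟫_ℂ).re)
    (h₂ : ∀ g ∈ H₂p, (⟪J₂ g, g⟫_ℂ).re ≤ -(κ₂ * ‖g‖ ^ 2))
    (u : H)
    (hu : u ∈ closure
      (Submodule.span ℂ {x : H | ∃ f ∈ H₁p, ∃ g ∈ H₂p, x = tmul f g} : Set H)) :
    (⟪J u, u⟫_ℂ).re ≤ -(κ₁ * κ₂ * ‖u‖ ^ 2) :=
  tensor_uniformly_negative_subspace_general tmul hinner J₁ hJ₁sa J₂ hJ₂sa J hJ H₁p H₂p κ₁ κ₂ hκ₁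
    hκ₂ h₁ h₂ u hu
end

section
/- Let a > 0, α₀ ∈ ℝ, n ∈ ℕ (n ≥ 1), and set λₙ = (πn/(2a))². The function ψₙ(x) = cos(√λₙ(x + a)) − (iα₀/√λₙ) sin(√λₙ(x + a)) on (−a, a) satisfies −ψₙ'' = λₙ ψₙ with ψₙ'(±a) = −iα₀ψₙ(±a), and ∫_{−a}^{a} ψₙ(−x) conj(ψₙ(x)) dx = a·(−1)ⁿ·(λₙ − α₀²)/λₙ. -/
/-!
With θ = k(x + a) the eigenfunction is the sinusoid cos θ − i(α₀/k) sin θ, so the eigenvalue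
equation and the boundary conditions are direct computations. Since 2ka = nπ, the reflection
x ↦ −x sends θ to nπ − θ, whence ψ(−x) = (−1)ⁿ conj ψ(x) and the integrand is (−1)ⁿ (conj ψ)².
The square of a sinusoid p cos θ + q sin θ is the constant (p² + q²)/2 plus a sinusoid of
frequency 2k, and the latter integrates to zero over the n full periods that fit in [−a, a].
-/

open Complex

noncomputable def sinusoid (k c : ℝ) (p q : ℂ) (x : ℝ) : ℂ :=
  p * cos (k * ((x : ℂ) + c)) + q * sin (k * ((x : ℂ) + c))

section

variable (k c : ℝ) (p q : ℂ)

theorem hasDerivAt_sinusoid (x : ℝ) :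
    HasDerivAt (sinusoid k c p q) (sinusoid k c (k * q) (-(k * p)) x) x := by
  have hθ : HasDerivAt (fun z : ℂ => (k : ℂ) * (z + c)) k (x : ℂ) := by
    simpa using ((hasDerivAt_id (x : ℂ)).add_const (c : ℂ)).const_mul (k : ℂ)
  have h := (((hasDerivAt_cos _).comp _ hθ).const_mul p).add
    (((hasDerivAt_sin _).comp _ hθ).const_mul q)
  convert h.comp_ofReal using 1
  · rfl
  · simp only [sinusoid]
    ring

theorem continuous_sinusoid : Continuous (sinusoid k c p q) :=
  continuous_iff_continuousAt.2 fun x => (hasDerivAt_sinusoid k c p q x).continuousAt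

theorem deriv_sinusoid : deriv (sinusoid k c p q) = sinusoid k c (k * q) (-(k * p)) :=
  funext fun x => (hasDerivAt_sinusoid k c p q x).deriv

theorem deriv_deriv_sinusoid (x : ℝ) :
    deriv (deriv (sinusoid k c p q)) x = -(k : ℂ) ^ 2 * sinusoid k c p q x := by
  rw [deriv_sinusoid, deriv_sinusoid]
  simp only [sinusoid]
  ring

theorem sinusoid_neg_self : sinusoid k c p q (-c) = p := by
  simp [sinusoid]

theorem conj_sinusoid (x : ℝ) :
    starRingEnd ℂ (sinusoid k c p q x) =
      sinusoid k c (starRingEnd ℂ p) (starRingEnd ℂ q) x := by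
  have hθ : (k : ℂ) * ((x : ℂ) + c) = ((k * (x + c) : ℝ) : ℂ) := by push_cast; ring
  simp only [sinusoid, hθ, ← ofReal_cos, ← ofReal_sin, map_add, map_mul, conj_ofReal]

theorem sinusoid_neg {n : ℕ} (hk : k * (2 * c) = n * Real.pi) (x : ℝ) :
    sinusoid k c p q (-x) = (-1) ^ n * sinusoid k c p (-q) x := by
  have hθ : (k : ℂ) * (((-x : ℝ) : ℂ) + c) = n * Real.pi - k * ((x : ℂ) + c) := by
    have h : ((k * (2 * c) : ℝ) : ℂ) = ((n * Real.pi : ℝ) : ℂ) := congrArg _ hk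
    push_cast at h ⊢
    linear_combination h
  simp only [sinusoid, hθ, cos_antiperiodic.nat_mul_sub_eq, sin_antiperiodic.nat_mul_sub_eq,
    cos_neg, sin_neg]
  ring

theorem sinusoid_self {n : ℕ} (hk : k * (2 * c) = n * Real.pi) :
    sinusoid k c p q c = (-1) ^ n * p := by
  simpa [sinusoid_neg_self] using sinusoid_neg k c p q hk (-c)

theorem sinusoid_eq_of_mul_sub_eq {m : ℤ} {x y : ℝ} (h : k * (y - x) = m * (2 * Real.pi)) :
    sinusoid k c p q y = sinusoid k c p q x := by
  have hθ : (k : ℂ) * ((y : ℂ) + c) = k * ((x : ℂ) + c) + m * (2 * Real.pi) := by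
    have h' : ((k * (y - x) : ℝ) : ℂ) = ((m * (2 * Real.pi) : ℝ) : ℂ) := congrArg _ h
    push_cast at h' ⊢
    linear_combination h'
  simp only [sinusoid, hθ, cos_add_int_mul_two_pi, sin_add_int_mul_two_pi]

theorem sinusoid_sq (x : ℝ) :
    sinusoid k c p q x ^ 2 =
      (p ^ 2 + q ^ 2) / 2 + sinusoid (2 * k) c ((p ^ 2 - q ^ 2) / 2) (p * q) x := by
  have hθ : ((2 * k : ℝ) : ℂ) * ((x : ℂ) + c) = 2 * (k * ((x : ℂ) + c)) := by push_cast; ring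
  simp only [sinusoid, hθ, cos_two_mul, sin_two_mul]
  linear_combination q ^ 2 * sin_sq_add_cos_sq ((k : ℂ) * ((x : ℂ) + c))

theorem integral_sinusoid_of_mul_sub_eq {m : ℤ} {u v : ℝ} (hk : k ≠ 0)
    (h : k * (v - u) = m * (2 * Real.pi)) :
    ∫ x in u..v, sinusoid k c p q x = 0 := by
  have hF : ∀ x, HasDerivAt (sinusoid k c (-q / k) (p / k)) (sinusoid k c p q x) x := by
    intro x
    have hk' : (k : ℂ) ≠ 0 := ofReal_ne_zero.2 hk
    convert hasDerivAt_sinusoid k c (-q / k) (p / k) x using 2 <;> field_simp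
  rw [intervalIntegral.integral_eq_sub_of_hasDerivAt (fun x _ => hF x)
    ((continuous_sinusoid k c p q).intervalIntegrable u v),
    sinusoid_eq_of_mul_sub_eq k c _ _ h, sub_self]

theorem integral_sinusoid_sq {n : ℕ} (hk : k ≠ 0) (hkc : k * (2 * c) = n * Real.pi) :
    ∫ x in -c..c, sinusoid k c p q x ^ 2 = c * (p ^ 2 + q ^ 2) := by
  have hperiod : 2 * k * (c - -c) = (n : ℤ) * (2 * Real.pi) := by push_cast; linear_combination 2 * hkc
  simp only [sinusoid_sq]
  rw [intervalIntegral.integral_add intervalIntegrable_const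
      ((continuous_sinusoid _ _ _ _).intervalIntegrable _ _),
    integral_sinusoid_of_mul_sub_eq _ _ _ _ (mul_ne_zero two_ne_zero hk) hperiod,
    intervalIntegral.integral_const]
  simp only [real_smul]
  push_cast
  ring

end

/-- for `λₙ = (πn/(2a))²`, `n ≥ 1`, the function
`ψₙ(x) = cos(√λₙ(x+a)) − (iα₀/√λₙ) sin(√λₙ(x+a))` satisfies `−ψₙ'' = λₙ ψₙ`
with `ψₙ'(±a) = −iα₀ ψₙ(±a)`, and
`∫_{−a}^{a} ψₙ(−x) conj(ψₙ(x)) dx = a (−1)ⁿ (λₙ − α₀²)/λₙ`. -/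
theorem transversal_excited_state
    (a α₀ : ℝ) (ha : 0 < a) (n : ℕ) (hn : 1 ≤ n)
    (k lam : ℝ) (hk : k = Real.pi * n / (2 * a)) (hlam : lam = k ^ 2)
    (ψ : ℝ → ℂ)
    (hψ : ψ = fun x : ℝ => Complex.cos (k * ((x : ℂ) + a))
      - (I * α₀ / k) * Complex.sin (k * ((x : ℂ) + a))) :
    (∀ x : ℝ, deriv (deriv ψ) x = -((lam : ℂ)) * ψ x) ∧
      deriv ψ a = -(I * α₀) * ψ a ∧
      deriv ψ (-a) = -(I * α₀) * ψ (-a) ∧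
      (∫ x in (-a)..a, ψ (-x) * (starRingEnd ℂ) (ψ x))
        = ((a * (-1 : ℝ) ^ n * (lam - α₀ ^ 2) / lam : ℝ) : ℂ) := by
  have hk0 : k ≠ 0 := by
    have : (0 : ℝ) < n := by exact_mod_cast hn
    rw [hk]
    positivity
  have hkn : k * (2 * a) = n * Real.pi := by
    rw [hk]
    field_simp
  have hk0' : (k : ℂ) ≠ 0 := ofReal_ne_zero.2 hk0
  have hψ' : ψ = sinusoid k a 1 (-(I * α₀ / k)) := by
    rw [hψ]
    funext x
    simp only [sinusoid]
    ring
  have hreflect : ∀ x, ψ (-x) * starRingEnd ℂ (ψ x) =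
      (-1) ^ n * sinusoid k a 1 (I * α₀ / k) x ^ 2 := by
    have hconj : starRingEnd ℂ (-(I * α₀ / k)) = I * α₀ / k := by
      simp [map_div₀, conj_ofReal, neg_div]
    intro x
    rw [hψ', sinusoid_neg k a _ _ hkn, conj_sinusoid, map_one, hconj, neg_neg]
    ring
  subst hlam
  refine ⟨fun x => ?_, ?_, ?_, ?_⟩
  · rw [hψ', deriv_deriv_sinusoid]
    push_cast
    ring
  · rw [hψ', deriv_sinusoid, sinusoid_self _ _ _ _ hkn, sinusoid_self _ _ _ _ hkn]
    field_simp
  · rw [hψ', deriv_sinusoid, sinusoid_neg_self, sinusoid_neg_self]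
    field_simp
  · simp_rw [hreflect]
    rw [intervalIntegral.integral_const_mul, integral_sinusoid_sq _ _ _ _ hk0 hkn, div_pow, mul_pow, I_sq]
    push_cast
    field_simp
    ring
end

section
/- For a > 0 and α₀ ∈ ℝ, the eigenvalue λₙ = (πn/(2a))² (n ≥ 1) of the transversal operator −d²/dx² on (−a,a) with boundary conditions ψ'(±a) = −iα₀ψ(±a) is of positive type with respect to the parity involution P if n is even and α₀² < λₙ or n is odd and α₀² > λₙ; and of negative type if n is odd and α₀² < λₙ or n is even and α₀² > λₙ. Concretely: the sign of (Pψₙ, ψₙ) = a(−1)ⁿ(λₙ − α₀²)/λₙ is positive in the first case and negative in the second. -/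
/-!
Because `β = iα₀/k` is purely imaginary, `conj ψ(x) = cos (k(x+a)) + β sin (k(x+a))`, and the
addition formulas give
`ψ(-x) conj ψ(x) = (1 - β²)/2 cos (2kx) + (1 + β²)/2 cos (2ka) + β sin (2kx)`.
Over `(-a, a)` the sine term integrates to zero by oddness and the first cosine term because
`sin (2ka) = sin (nπ) = 0`, leaving `a (1 + β²) cos (nπ) = a (-1)ⁿ (λ - α₀²)/λ`.
-/

open Complex ComplexConjugate

theorem intervalIntegral.integral_eq_zero_of_odd {E : Type*} [NormedAddCommGroup E]
    [NormedSpace ℝ E] {f : ℝ → E} (hf : ∀ x, f (-x) = -f x) (a : ℝ) :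
    ∫ x in -a..a, f x = 0 := by
  have h := intervalIntegral.integral_comp_neg (a := -a) (b := a) f
  simp only [neg_neg, hf, intervalIntegral.integral_neg] at h
  have h2 : (2 : ℝ) • ∫ x in -a..a, f x = 0 := by
    rw [two_smul]; nth_rewrite 1 [← h]; exact neg_add_cancel _
  exact (smul_eq_zero.mp h2).resolve_left two_ne_zero

noncomputable def transversalMode (k a : ℝ) (β : ℂ) (x : ℝ) : ℂ :=
  cos (k * ((x : ℂ) + a)) - β * sin (k * ((x : ℂ) + a))

section
variable (k a : ℝ) {β : ℂ}

theorem transversalMode_neg_mul_conj (hβ : conj β = -β) (x : ℝ) :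
    transversalMode k a β (-x) * conj (transversalMode k a β x) =
      (1 - β ^ 2) / 2 * cos (2 * k * x) + (1 + β ^ 2) / 2 * cos (2 * k * a)
        + β * sin (2 * k * x) := by
  have hconj :
      conj (transversalMode k a β x) = cos (k * x + k * a) + β * sin (k * x + k * a) := by
    simp only [transversalMode, map_sub, map_mul, hβ, ← cos_conj, ← sin_conj, map_add, conj_ofReal]
    ring_nf
  have hneg : transversalMode k a β (-x) = cos (k * a - k * x) - β * sin (k * a - k * x) := by
    simp only [transversalMode]; push_cast; ring_nf
  rw [hneg, hconj]
  simp only [cos_sub, sin_sub, cos_add, sin_add, two_mul, add_mul, mul_add]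
  linear_combination
    (cos (k * a) ^ 2 - β ^ 2 * sin (k * a) ^ 2 - 1 / 2 + β ^ 2 / 2) * sin_sq_add_cos_sq (k * x : ℂ)
    + (2 * β * cos (k * x : ℂ) * sin (k * x : ℂ) + β ^ 2 * sin (k * x : ℂ) ^ 2 + 1 / 2 - β ^ 2 / 2
        - sin (k * x : ℂ) ^ 2) * sin_sq_add_cos_sq (k * a : ℂ)

theorem integral_transversalMode_neg_mul_conj (hβ : conj β = -β) (hk : k ≠ 0) :
    ∫ x in -a..a, transversalMode k a β (-x) * conj (transversalMode k a β x) =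
      (1 - β ^ 2) * sin (2 * k * a) / (2 * k) + a * (1 + β ^ 2) * cos (2 * k * a) := by
  have h2k : (2 * k : ℂ) ≠ 0 := by exact_mod_cast mul_ne_zero two_ne_zero hk
  have hsin_odd : ∀ x : ℝ, β * sin (2 * k * ((-x : ℝ) : ℂ)) = -(β * sin (2 * k * x)) := by
    intro x; rw [ofReal_neg, mul_neg, sin_neg, mul_neg]
  simp_rw [transversalMode_neg_mul_conj k a hβ]
  rw [intervalIntegral.integral_add (Continuous.intervalIntegrable (by fun_prop) _ _)
      (Continuous.intervalIntegrable (by fun_prop) _ _),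
    intervalIntegral.integral_add (Continuous.intervalIntegrable (by fun_prop) _ _)
      (Continuous.intervalIntegrable (by fun_prop) _ _),
    intervalIntegral.integral_const_mul, integral_cos_mul_complex h2k,
    intervalIntegral.integral_const, intervalIntegral.integral_eq_zero_of_odd hsin_odd]
  simp only [ofReal_neg, mul_neg, sin_neg, real_smul]
  push_cast
  field_simp
  ring

end

theorem neg_one_pow_mul_sub_pos {n : ℕ} {x y : ℝ} (h : (Even n ∧ x < y) ∨ (Odd n ∧ y < x)) :
    0 < (-1) ^ n * (y - x) := by
  rcases h with ⟨hn, hxy⟩ | ⟨hn, hyx⟩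
  · rw [hn.neg_one_pow]; linarith
  · rw [hn.neg_one_pow]; linarith

theorem neg_one_pow_mul_sub_neg {n : ℕ} {x y : ℝ} (h : (Odd n ∧ x < y) ∨ (Even n ∧ y < x)) :
    (-1) ^ n * (y - x) < 0 := by
  rcases h with ⟨hn, hxy⟩ | ⟨hn, hyx⟩
  · rw [hn.neg_one_pow]; linarith
  · rw [hn.neg_one_pow]; linarith

/-- definiteness type of the eigenvalue `λₙ = (πn/(2a))²` of the
transversal operator w.r.t. parity: the parity inner product
`(Pψₙ, ψₙ) = ∫_{−a}^{a} ψₙ(−x) conj(ψₙ(x)) dx = a (−1)ⁿ (λₙ − α₀²)/λₙ` is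
positive if (`n` even and `α₀² < λₙ`) or (`n` odd and `α₀² > λₙ`), and negative
if (`n` odd and `α₀² < λₙ`) or (`n` even and `α₀² > λₙ`). -/
theorem transversal_eigenvalue_type
    (a α₀ : ℝ) (ha : 0 < a) (n : ℕ) (hn : 1 ≤ n)
    (k lam : ℝ) (hk : k = Real.pi * n / (2 * a)) (hlam : lam = k ^ 2)
    (ψ : ℝ → ℂ)
    (hψ : ψ = fun x : ℝ => Complex.cos (k * ((x : ℂ) + a))
      - (I * α₀ / k) * Complex.sin (k * ((x : ℂ) + a))) :
    ((Even n ∧ α₀ ^ 2 < lam) ∨ (Odd n ∧ lam < α₀ ^ 2) →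
      ∃ r : ℝ, 0 < r ∧ r = a * (-1 : ℝ) ^ n * (lam - α₀ ^ 2) / lam ∧
        (∫ x in (-a)..a, ψ (-x) * (starRingEnd ℂ) (ψ x)) = (r : ℂ)) ∧
    ((Odd n ∧ α₀ ^ 2 < lam) ∨ (Even n ∧ lam < α₀ ^ 2) →
      ∃ r : ℝ, r < 0 ∧ r = a * (-1 : ℝ) ^ n * (lam - α₀ ^ 2) / lam ∧
        (∫ x in (-a)..a, ψ (-x) * (starRingEnd ℂ) (ψ x)) = (r : ℂ)) := by
  have hk0 : 0 < k := by rw [hk]; positivity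
  have hlam0 : 0 < lam := by rw [hlam]; positivity
  have hka : 2 * k * a = n * Real.pi := by rw [hk]; field_simp
  have hβ : conj (I * α₀ / k) = -(I * α₀ / k) := by simp [neg_div]
  have hkC : (k : ℂ) ≠ 0 := by exact_mod_cast hk0.ne'
  have h1β : 1 + (I * α₀ / k) ^ 2 = ((lam - α₀ ^ 2) / lam : ℝ) := by
    rw [hlam]; push_cast; field_simp; rw [I_sq]; ring
  have hsin : sin (2 * k * a) = 0 := by
    exact_mod_cast (by rw [hka]; exact Real.sin_nat_mul_pi n : Real.sin (2 * k * a) = 0)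
  have hcos : cos (2 * k * a) = (-1) ^ n := by
    exact_mod_cast (by rw [hka]; exact Real.cos_nat_mul_pi n : Real.cos (2 * k * a) = (-1) ^ n)
  have hval : (∫ x in (-a)..a, ψ (-x) * conj (ψ x)) =
      ((a * (-1 : ℝ) ^ n * (lam - α₀ ^ 2) / lam : ℝ) : ℂ) := by
    rw [show ψ = transversalMode k a (I * α₀ / k) from hψ,
      integral_transversalMode_neg_mul_conj k a hβ hk0.ne', hsin, hcos, h1β]
    push_cast
    ring
  refine ⟨fun h => ⟨_, ?_, rfl, hval⟩, fun h => ⟨_, ?_, rfl, hval⟩⟩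
  · rw [mul_assoc]; exact div_pos (mul_pos ha (neg_one_pow_mul_sub_pos h)) hlam0
  · rw [mul_assoc]
    exact div_neg_of_neg_of_pos (mul_neg_of_pos_of_neg ha (neg_one_pow_mul_sub_neg h)) hlam0
end

section
/- Let J be a bounded symmetric involution on a Hilbert space H and T a densely defined closed operator with T = J T* J. If λ ∈ σ_ap(T) is a spectral point of positive type (every unit-norm approximate eigensequence fₙ for λ satisfies liminf (Jfₙ, fₙ) > 0) or of negative type (limsup (Jfₙ, fₙ) < 0), then λ is real. -/
open scoped InnerProductSpace

/-- The operator `f ↦ J (S (J f))` with domain `{f : J f ∈ dom S}`, used to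
express `J`-self-adjointness `T = J T* J` of an unbounded operator. -/
noncomputable def conjPMap {H : Type*} [NormedAddCommGroup H] [InnerProductSpace ℂ H]
    (J : H →L[ℂ] H) (S : H →ₗ.[ℂ] H) : H →ₗ.[ℂ] H where
  domain := S.domain.comap (J : H →ₗ[ℂ] H)
  toFun :=
    { toFun := fun f => J (S ⟨(J : H →ₗ[ℂ] H) f.1, f.2⟩)
      map_add' := by
        intro f g
        show J (S ⟨_, _⟩) = J (S ⟨_, _⟩) + J (S ⟨_, _⟩)
        rw [← map_add]
        congr 1
        rw [← S.map_add]
        congr 1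
        ext
        simp
      map_smul' := by
        intro c f
        show J (S ⟨_, _⟩) = c • J (S ⟨_, _⟩)
        rw [← map_smul]
        congr 1
        rw [← S.map_smul]
        congr 1
        ext
        simp }

/-!
For `x ∈ dom T`, `J`-symmetry `T ⊆ J T* J` makes the `J`-form `⟪T x, J x⟫` real, so
`im ⟪(T - λ) x, J x⟫ = im λ · ⟪J x, x⟫`. Along a unit approximate eigensequence the left side tends
to zero; if `im λ ≠ 0` this forces `⟪J fₙ, fₙ⟫ → 0`, which a point of positive or negative type
rules out.
-/

open Filter

namespace LinearPMap

variable {H : Type*} [NormedAddCommGroup H] [InnerProductSpace ℂ H] [CompleteSpace H]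
  {J : H →L[ℂ] H} {T : H →ₗ.[ℂ] H}

theorem im_inner_apply_conj_apply_eq_zero (hJsa : IsSelfAdjoint J) (hJ2 : J ∘L J = 1)
    (hdense : Dense (T.domain : Set H)) (hT : T ≤ conjPMap J T.adjoint) (x : T.domain) :
    (⟪T x, J x⟫_ℂ).im = 0 := by
  let y : T.adjoint.domain := ⟨J x, hT.1 x.2⟩
  have hTx : T x = J (T.adjoint y) := hT.2 (y := ⟨x, hT.1 x.2⟩) rfl
  rw [← Complex.conj_eq_iff_im]
  calc (starRingEnd ℂ) ⟪T x, J x⟫_ℂ = ⟪(y : H), T x⟫_ℂ := inner_conj_symm _ _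
    _ = ⟪T.adjoint y, x⟫_ℂ := (T.adjoint_isFormalAdjoint hdense y x).symm
    _ = ⟪T.adjoint y, J (J x)⟫_ℂ := by rw [← ContinuousLinearMap.comp_apply, hJ2]; rfl
    _ = ⟪T x, J x⟫_ℂ := by rw [hTx]; exact (hJsa.isSymmetric _ _).symm

theorem im_inner_sub_smul_apply_conj_apply (hJsa : IsSelfAdjoint J) (hJ2 : J ∘L J = 1)
    (hdense : Dense (T.domain : Set H)) (hT : T ≤ conjPMap J T.adjoint) (lam : ℂ)
    (x : T.domain) :
    (⟪T x - lam • (x : H), J x⟫_ℂ).im = lam.im * (⟪J x, x⟫_ℂ).re := by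
  have hreal := im_inner_apply_conj_apply_eq_zero hJsa hJ2 hdense hT x
  have hJx : ⟪(x : H), J x⟫_ℂ = ⟪J x, x⟫_ℂ := (hJsa.isSymmetric x x).symm
  have hJreal : (⟪J x, x⟫_ℂ).im = 0 := hJsa.isSymmetric.im_inner_apply_self x
  rw [inner_sub_left, inner_smul_left, hJx, Complex.sub_im, Complex.mul_im, hreal, hJreal]
  simp

theorem tendsto_re_inner_apply_self_of_approx_eigen (hJsa : IsSelfAdjoint J)
    (hJ2 : J ∘L J = 1) (hdense : Dense (T.domain : Set H)) (hT : T ≤ conjPMap J T.adjoint)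
    {lam : ℂ} (him : lam.im ≠ 0) {f : ℕ → T.domain} (hnorm : ∀ n, ‖(f n : H)‖ = 1)
    (happrox : Tendsto (fun n => ‖T (f n) - lam • (f n : H)‖) atTop (nhds 0)) :
    Tendsto (fun n => (⟪J (f n : H), (f n : H)⟫_ℂ).re) atTop (nhds 0) := by
  have hbound : ∀ n, ‖lam.im * (⟪J (f n : H), (f n : H)⟫_ℂ).re‖ ≤
      ‖T (f n) - lam • (f n : H)‖ * ‖J‖ := fun n => by
    rw [← im_inner_sub_smul_apply_conj_apply hJsa hJ2 hdense hT lam (f n)]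
    calc _ ≤ ‖⟪T (f n) - lam • (f n : H), J (f n : H)⟫_ℂ‖ := Complex.abs_im_le_norm _
      _ ≤ ‖T (f n) - lam • (f n : H)‖ * ‖J (f n : H)‖ := norm_inner_le_norm _ _
      _ ≤ ‖T (f n) - lam • (f n : H)‖ * ‖J‖ := by
        gcongr
        simpa [hnorm n] using J.le_opNorm (f n : H)
  have hscaled := squeeze_zero_norm hbound (by simpa using happrox.mul_const ‖J‖)
  simpa [him] using hscaled.const_mul lam.im⁻¹

end LinearPMap

theorem spectral_point_definite_type_real_general
    {H : Type*} [NormedAddCommGroup H] [InnerProductSpace ℂ H] [CompleteSpace H]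
    (J : H →L[ℂ] H) (hJsa : IsSelfAdjoint J) (hJ2 : J ∘L J = 1)
    (T : H →ₗ.[ℂ] H) (hdense : Dense (T.domain : Set H))
    (hJsaT : T = conjPMap J T.adjoint)
    (lam : ℂ)
    (hap : ∃ f : ℕ → T.domain, (∀ n, ‖(f n : H)‖ = 1) ∧
      Tendsto (fun n => ‖T (f n) - lam • (f n : H)‖) atTop (nhds 0))
    (htype :
      (∀ f : ℕ → T.domain, (∀ n, ‖(f n : H)‖ = 1) →
        Tendsto (fun n => ‖T (f n) - lam • (f n : H)‖) atTop (nhds 0) →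
        0 < atTop.liminf (fun n => (⟪J (f n : H), (f n : H)⟫_ℂ).re)) ∨
      (∀ f : ℕ → T.domain, (∀ n, ‖(f n : H)‖ = 1) →
        Tendsto (fun n => ‖T (f n) - lam • (f n : H)‖) atTop (nhds 0) →
        atTop.limsup (fun n => (⟪J (f n : H), (f n : H)⟫_ℂ).re) < 0)) :
    lam.im = 0 := by
  obtain ⟨f, hnorm, happrox⟩ := hap
  by_contra him
  have hform := LinearPMap.tendsto_re_inner_apply_self_of_approx_eigen hJsa hJ2 hdense hJsaT.le
    him hnorm happrox
  rcases htype with hpos | hneg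
  · exact (hpos f hnorm happrox).ne' hform.liminf_eq
  · exact (hneg f hnorm happrox).ne hform.limsup_eq

/-- a spectral point of positive or negative type of a
`J`-self-adjoint operator is real. -/
theorem spectral_point_definite_type_real
    {H : Type*} [NormedAddCommGroup H] [InnerProductSpace ℂ H] [CompleteSpace H]
    (J : H →L[ℂ] H) (hJsa : IsSelfAdjoint J) (hJ2 : J ∘L J = 1)
    (T : H →ₗ.[ℂ] H) (hdense : Dense (T.domain : Set H)) (hclosed : T.IsClosed)
    (hJsaT : T = conjPMap J T.adjoint)
    (lam : ℂ)
    (hap : ∃ f : ℕ → T.domain, (∀ n, ‖(f n : H)‖ = 1) ∧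
      Tendsto (fun n => ‖T (f n) - lam • (f n : H)‖) atTop (nhds 0))
    (htype :
      (∀ f : ℕ → T.domain, (∀ n, ‖(f n : H)‖ = 1) →
        Tendsto (fun n => ‖T (f n) - lam • (f n : H)‖) atTop (nhds 0) →
        0 < atTop.liminf (fun n => (⟪J (f n : H), (f n : H)⟫_ℂ).re)) ∨
      (∀ f : ℕ → T.domain, (∀ n, ‖(f n : H)‖ = 1) →
        Tendsto (fun n => ‖T (f n) - lam • (f n : H)‖) atTop (nhds 0) →
        atTop.limsup (fun n => (⟪J (f n : H), (f n : H)⟫_ℂ).re) < 0)) :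
    lam.im = 0 :=
  spectral_point_definite_type_real_general J hJsa hJ2 T hdense hJsaT lam hap htype
end
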